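/- The homeomorphic embedding relation ⊴ on terms over a finite fixed-arity signature is a well-quasi-order: it is reflexive, transitive, and for every infinite sequence of terms t₀, t₁, t₂, … there exist indices i < j with tᵢ ⊴ tⱼ. -/

import Mathlib

/-- A term over a fixed-arity signature `(L, a)`: a node labelled `l : L`
together with exactly `a l` child terms (indexed by `Fin (a l)`). -/
inductive Term (L : Type) (a : L → ℕ) : Type where
  | node (l : L) (ts : Fin (a l) → Term L a) : Term L a

/-- The homeomorphic embedding relation `⊴`, the least relation closed under
diving (`s ⊴ node l ts` whenever `s ⊴ t` for some child `t` of `ts`) and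
coupling (`node l ts ⊴ node l ts'` whenever the children embed componentwise). -/
inductive Emb {L : Type} {a : L → ℕ} : Term L a → Term L a → Prop where
  | dive {s : Term L a} {l : L} {ts : Fin (a l) → Term L a} (i : Fin (a l)) :
      Emb s (ts i) → Emb s (Term.node l ts)
  | couple {l : L} {ts ts' : Fin (a l) → Term L a} :
      (∀ i : Fin (a l), Emb (ts i) (ts' i)) →
      Emb (Term.node l ts) (Term.node l ts')

namespace KruskalAux
variable {L : Type} {a : L → ℕ}

theorem emb_refl (t : Term L a) : Emb t t := by
  induction t with
  | node l ts ih => exact Emb.couple ih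

theorem emb_trans : ∀ {s t u : Term L a}, Emb s t → Emb t u → Emb s u := by
  intro s t u h1 h2
  induction h2 generalizing s with
  | dive i h ih => exact Emb.dive i (ih h1)
  | couple h ih =>
    cases h1 with
    | dive j hj => exact Emb.dive j (ih j hj)
    | couple hss => exact Emb.couple fun i => ih i (hss i)

instance : IsRefl (Term L a) Emb := ⟨emb_refl⟩
instance : IsTrans (Term L a) Emb := ⟨fun _ _ _ => emb_trans⟩
instance : IsPreorder (Term L a) Emb := {}

noncomputable def size : Term L a → ℕ :=
  Term.rec (fun _ _ ih => 1 + ∑ i, ih i)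

def label : Term L a → L
  | .node l _ => l

def children : (t : Term L a) → Fin (a (label t)) → Term L a
  | .node _ ts => ts

theorem size_node (l : L) (ts : Fin (a l) → Term L a) :
    size (Term.node l ts) = 1 + ∑ i, size (ts i) := rfl

theorem size_children_lt (t : Term L a) (i : Fin (a (label t))) :
    size (children t i) < size t := by
  cases t with
  | node l ts =>
    simp only [children, size_node]
    have : size (ts i) ≤ ∑ j, size (ts j) :=
      Finset.single_le_sum (f := fun j => size (ts j)) (fun _ _ => Nat.zero_le _)
        (Finset.mem_univ i)
    omega

theorem emb_children (t : Term L a) (i : Fin (a (label t))) : Emb (children t i) t := by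
  cases t with
  | node l ts => exact Emb.dive i (emb_refl _)

theorem eq_node_of_label {l₀ : L} (t : Term L a) (h : label t = l₀) :
    ∃ ts : Fin (a l₀) → Term L a, t = Term.node l₀ ts ∧
      ∀ k, ∃ i : Fin (a (label t)), children t i = ts k := by
  cases t with
  | node l ts =>
    cases h
    exact ⟨ts, rfl, fun k => ⟨k, rfl⟩⟩

def Bad (f : ℕ → Term L a) : Prop := ∀ i j : ℕ, i < j → ¬ Emb (f i) (f j)

theorem exists_min (g : ℕ → Term L a) (hg : Bad g) (n : ℕ) :
    ∃ f : ℕ → Term L a, (Bad f ∧ ∀ i < n, f i = g i) ∧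
      ∀ f' : ℕ → Term L a, Bad f' → (∀ i < n, f' i = g i) →
        size (f n) ≤ size (f' n) := by
  have hA : {k | ∃ f : ℕ → Term L a, Bad f ∧ (∀ i < n, f i = g i) ∧
      size (f n) = k}.Nonempty := ⟨size (g n), g, hg, fun i _ => rfl, rfl⟩
  obtain ⟨k, ⟨f, hf1, hf2, hf3⟩, hmin⟩ := Nat.lt_wfRel.wf.has_min _ hA
  refine ⟨f, ⟨hf1, hf2⟩, fun f' hb hpre => ?_⟩
  have := hmin (size (f' n)) ⟨f', hb, hpre, rfl⟩
  change ¬ size (f' n) < k at this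
  omega

noncomputable def Fsub (hbad : ∃ f : ℕ → Term L a, Bad f) :
    ℕ → {f : ℕ → Term L a // Bad f}
  | 0 => ⟨(exists_min hbad.choose hbad.choose_spec 0).choose,
          (exists_min hbad.choose hbad.choose_spec 0).choose_spec.1.1⟩
  | n+1 => ⟨(exists_min (Fsub hbad n).1 (Fsub hbad n).2 (n+1)).choose,
            (exists_min (Fsub hbad n).1 (Fsub hbad n).2 (n+1)).choose_spec.1.1⟩

theorem Fsub_agree (hbad : ∃ f : ℕ → Term L a, Bad f) (n : ℕ) :
    ∀ i < n + 1, (Fsub hbad (n+1)).1 i = (Fsub hbad n).1 i :=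
  (exists_min (Fsub hbad n).1 (Fsub hbad n).2 (n+1)).choose_spec.1.2

theorem Fsub_min_zero (hbad : ∃ f : ℕ → Term L a, Bad f) (f' : ℕ → Term L a)
    (hb : Bad f') : size ((Fsub hbad 0).1 0) ≤ size (f' 0) :=
  (exists_min hbad.choose hbad.choose_spec 0).choose_spec.2 f' hb
    (fun i hi => absurd hi (Nat.not_lt_zero i))

theorem Fsub_min_succ (hbad : ∃ f : ℕ → Term L a, Bad f) (n : ℕ) (f' : ℕ → Term L a)
    (hb : Bad f') (hpre : ∀ i < n + 1, f' i = (Fsub hbad n).1 i) :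
    size ((Fsub hbad (n+1)).1 (n+1)) ≤ size (f' (n+1)) :=
  (exists_min (Fsub hbad n).1 (Fsub hbad n).2 (n+1)).choose_spec.2 f' hb hpre

noncomputable def mbs (hbad : ∃ f : ℕ → Term L a, Bad f) : ℕ → Term L a :=
  fun n => (Fsub hbad n).1 n

theorem Fsub_eq_mbs (hbad : ∃ f : ℕ → Term L a, Bad f) :
    ∀ m n, n ≤ m → (Fsub hbad m).1 n = mbs hbad n := by
  intro m
  induction m with
  | zero =>
    intro n hn
    have : n = 0 := Nat.le_zero.mp hn
    subst this; rfl
  | succ m ih =>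
    intro n hn
    rcases Nat.lt_succ_iff_lt_or_eq.mp (Nat.lt_succ_of_le hn) with h | h
    · rw [Fsub_agree hbad m n (by omega), ih n (by omega)]
    · subst h; rfl

theorem mbs_bad (hbad : ∃ f : ℕ → Term L a, Bad f) : Bad (mbs hbad) := by
  intro i j hij h
  have hi := Fsub_eq_mbs hbad j i (le_of_lt hij)
  exact (Fsub hbad j).2 i j hij (by rw [hi]; exact h)

theorem mbs_min (hbad : ∃ f : ℕ → Term L a, Bad f) (n : ℕ) (f' : ℕ → Term L a)
    (hb : Bad f') (hpre : ∀ i < n, f' i = mbs hbad i) :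
    size (mbs hbad n) ≤ size (f' n) := by
  cases n with
  | zero => exact Fsub_min_zero hbad f' hb
  | succ m =>
    exact Fsub_min_succ hbad m f' hb
      (fun i hi => (hpre i hi).trans (Fsub_eq_mbs hbad m i (Nat.lt_succ_iff.mp hi)).symm)

theorem S_pwo (hbad : ∃ f : ℕ → Term L a, Bad f) :
    {s : Term L a | ∃ n i, children (mbs hbad n) i = s}.PartiallyWellOrderedOn Emb := by
  rw [Set.partiallyWellOrderedOn_iff_exists_lt]
  intro h hh
  by_contra hgood
  push_neg at hgood
  have hbadh : Bad h := fun i j hij => hgood i j hij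
  choose nf cf hcf using hh
  obtain ⟨N, ⟨k₀, hk₀⟩, hNmin⟩ := Nat.lt_wfRel.wf.has_min (Set.range nf) ⟨nf 0, 0, rfl⟩
  have hge : ∀ k, N ≤ nf k := fun k => not_lt.mp (hNmin (nf k) ⟨k, rfl⟩)
  set c : ℕ → Term L a := fun i => if i < N then mbs hbad i else h (k₀ + (i - N)) with hc
  have hchild : ∀ k, Emb (h k) (mbs hbad (nf k)) := by
    intro k
    rw [← hcf k]
    exact emb_children _ _
  have hcbad : Bad c := by
    intro i j hij hEmb
    by_cases hi : i < N <;> by_cases hj : j < N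
    · simp only [hc, if_pos hi, if_pos hj] at hEmb
      exact mbs_bad hbad i j hij hEmb
    · simp only [hc, if_pos hi, if_neg hj] at hEmb
      have h2 : Emb (mbs hbad i) (mbs hbad (nf (k₀ + (j - N)))) :=
        emb_trans hEmb (hchild _)
      exact mbs_bad hbad i (nf (k₀ + (j - N))) (lt_of_lt_of_le hi (hge _)) h2
    · omega
    · simp only [hc, if_neg hi, if_neg hj] at hEmb
      exact hbadh (k₀ + (i - N)) (k₀ + (j - N)) (by omega) hEmb
  have hpre : ∀ i < N, c i = mbs hbad i := fun i hi => by simp only [hc, if_pos hi]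
  have hlt : size (c N) < size (mbs hbad N) := by
    have hcN : c N = h k₀ := by simp [hc]
    have h1 := size_children_lt (mbs hbad (nf k₀)) (cf k₀)
    rw [hcf k₀] at h1
    rw [hk₀] at h1
    rw [hcN]
    exact h1
  exact absurd (mbs_min hbad N c hcbad hpre) (not_le.mpr hlt)

theorem good_pi (S : Set (Term L a)) (hS : S.PartiallyWellOrderedOn Emb) :
    ∀ (m : ℕ) (v : ℕ → Fin m → Term L a), (∀ n k, v n k ∈ S) →
      ∃ i j, i < j ∧ ∀ k, Emb (v i k) (v j k) := by
  intro m
  induction m with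
  | zero => exact fun v _ => ⟨0, 1, one_pos, fun k => k.elim0⟩
  | succ m ih =>
    intro v hv
    obtain ⟨g, hg⟩ := hS.exists_monotone_subseq (f := fun n => v n 0) (fun n => hv n 0)
    obtain ⟨i, j, hij, hh⟩ := ih (fun n k => v (g n) k.succ) (fun n k => hv (g n) k.succ)
    exact ⟨g i, g j, g.strictMono hij,
      fun k => Fin.cases (hg i j hij.le) (fun k' => hh k') k⟩

theorem label_pwo [Finite L] :
    (Set.univ : Set (Term L a)).PartiallyWellOrderedOn
      (fun x y => label x = label y) := by
  rw [Set.partiallyWellOrderedOn_iff_exists_lt]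
  intro f _
  obtain ⟨x, y, hxy, he⟩ := Finite.exists_ne_map_eq_of_infinite (fun n => label (f n))
  rcases hxy.lt_or_gt with h | h
  · exact ⟨x, y, h, he⟩
  · exact ⟨y, x, h, he.symm⟩

theorem no_bad [Finite L] : ¬ ∃ f : ℕ → Term L a, Bad f := by
  intro hbad
  haveI : IsRefl (Term L a) (fun x y => label x = label y) := ⟨fun _ => rfl⟩
  haveI : IsTrans (Term L a) (fun x y => label x = label y) :=
    ⟨fun _ _ _ h1 h2 => h1.trans h2⟩
  obtain ⟨G, hG⟩ := label_pwo.exists_monotone_subseq (f := fun n => mbs hbad n)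
    (fun _ => Set.mem_univ _)
  have hl : ∀ n, label (mbs hbad (G n)) = label (mbs hbad (G 0)) :=
    fun n => (hG 0 n (Nat.zero_le n)).symm
  have hch := fun n => eq_node_of_label (mbs hbad (G n)) (hl n)
  choose v hv1 hv2 using hch
  have hvS : ∀ n k, v n k ∈ {s : Term L a | ∃ n i, children (mbs hbad n) i = s} := by
    intro n k
    obtain ⟨i, hi⟩ := hv2 n k
    exact ⟨G n, i, hi⟩
  obtain ⟨i, j, hij, hemb⟩ := good_pi _ (S_pwo hbad) _ v hvS
  have hEmb : Emb (mbs hbad (G i)) (mbs hbad (G j)) := by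
    rw [hv1 i, hv1 j]
    exact Emb.couple hemb
  exact mbs_bad hbad (G i) (G j) (G.strictMono hij) hEmb

end KruskalAux

/-- The homeomorphic embedding relation on terms over a finite fixed-arity
signature is a well-quasi-order: it is reflexive, transitive, and for every
infinite sequence of terms `t₀, t₁, …` there exist `i < j` with `tᵢ ⊴ tⱼ`. -/
theorem emb_isWellQuasiOrder {L : Type} [Finite L] (a : L → ℕ) :
    Reflexive (@Emb L a) ∧ Transitive (@Emb L a) ∧
      ∀ t : ℕ → Term L a, ∃ i j : ℕ, i < j ∧ Emb (t i) (t j) := by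
  refine ⟨fun t => KruskalAux.emb_refl t, fun _ _ _ h1 h2 => KruskalAux.emb_trans h1 h2, ?_⟩
  intro t
  by_contra h
  push_neg at h
  exact KruskalAux.no_bad ⟨t, fun i j hij => h i j hij⟩
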